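/- arXiv:1612.08424 — 2 statements merged into one kernel-verified Lean document; each statement's English description precedes it below -/
import Mathlib

section
/- Indiscernibility with modal substituends entails (Cov). Fix a type W of worlds, a relation R : W → W → Prop, and a domain type D. Suppose the indiscernibility schema (Indisc) holds with arbitrary (including modal) substituends, i.e. for every property Φ : (W → Set D) → W → Prop, all world-indexed pluralities pp, qq : W → Set D, and every world w: if pp w = qq w then Φ pp w ↔ Φ qq w. Then (Cov) holds: for all pp, qq and every world w, if pp w = qq w then pp v = qq v for every v with R w v. -/
/-- Indiscernibility with modal substituends entails (Cov). -/
theorem indisc_entails_cov (W D : Type) (R : W → W → Prop)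
    (indisc : ∀ (Φ : (W → Set D) → W → Prop) (pp qq : W → Set D) (w : W),
      pp w = qq w → (Φ pp w ↔ Φ qq w)) :
    ∀ (pp qq : W → Set D) (w : W), pp w = qq w → ∀ v, R w v → pp v = qq v := by
  intro pp qq w hw
  -- The modal property "necessarily coextensive with `qq`" holds of `qq`, so it transfers to `pp`.
  exact (indisc (fun rr u => ∀ v, R u v → rr v = qq v) pp qq w hw).mpr fun _ _ => rfl
end

section
/- Uniform Adjudication (UA): if (Cov) holds universally in a Kripke model, then (NecInc) holds universally. Fix a type W of worlds, a relation R : W → W → Prop, and a domain type D. Suppose that for all world-indexed pluralities pp, qq : W → Set D and every world w: pp w = qq w implies pp v = qq v for every v with R w v. Then for every plurality pp, every world w, and every a : D: if a ∈ pp w then a ∈ pp v for every v with R w v. (The proof applies the (Cov) hypothesis to pp and the adjunction pp + a, using that a ∈ pp w gives pp w = pp w ∪ {a}.) -/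
/-- Uniform Adjudication (UA): if (Cov) holds universally in a Kripke model,
then (NecInc) holds universally. -/
theorem cov_implies_necInc (W D : Type) (R : W → W → Prop)
    (cov : ∀ (pp qq : W → Set D) (w : W),
      pp w = qq w → ∀ v, R w v → pp v = qq v) :
    ∀ (pp : W → Set D) (w : W) (a : D),
      a ∈ pp w → ∀ v, R w v → a ∈ pp v := by
  intro pp w a ha v hv
  have adjunction_eq : pp w = insert a (pp w) := (Set.insert_eq_of_mem ha).symm
  rw [cov pp (fun u => insert a (pp u)) w adjunction_eq v hv]
  exact Set.mem_insert a (pp v)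
end
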